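/- Let d ≥ 1, θ ∈ ℝ, and let u : ℝ^d_+ → ℝ be a smooth compactly supported function on the half-space ℝ^d_+ = {x : x¹ > 0} vanishing near the boundary x¹ = 0. If θ ≠ d + 1, then ∫_{ℝ^d_+} |u(x)/x¹|² (x¹)^{θ-d} dx ≤ (4/(d+1-θ)²) ∫_{ℝ^d_+} |∇u(x)|² (x¹)^{θ-d} dx. -/

import Mathlib

open MeasureTheory Set

private lemma vanish_integrableOn {h : ℝ → ℝ} {a R : ℝ} (ha : 0 < a)
    (hc : ContinuousOn h (Ioi (0:ℝ)))
    (h0 : ∀ t : ℝ, t ∉ Icc a R → h t = 0) :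
    IntegrableOn h (Ioi (0:ℝ)) ∧ ∫ t in Ioi (0:ℝ), h t = ∫ t in Icc a R, h t := by
  have hsub : Icc a R ⊆ Ioi (0:ℝ) := fun t ht => lt_of_lt_of_le ha ht.1
  have hind : h = (Icc a R).indicator h := by
    funext t
    by_cases ht : t ∈ Icc a R
    · simp [ht]
    · simp [ht, h0 t ht]
  have hint : IntegrableOn h (Icc a R) :=
    (hc.mono hsub).integrableOn_compact isCompact_Icc
  constructor
  · rw [hind]
    exact (hint.integrable_indicator measurableSet_Icc).integrableOn
  · calc ∫ t in Ioi (0:ℝ), h t = ∫ t in Ioi (0:ℝ), (Icc a R).indicator h t := by rw [← hind]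
      _ = ∫ t in Ioi (0:ℝ) ∩ Icc a R, h t := setIntegral_indicator measurableSet_Icc
      _ = ∫ t in Icc a R, h t := by rw [inter_eq_right.mpr hsub]

private lemma hardy1D {α : ℝ} (hα : α ≠ 1) {g : ℝ → ℝ} (hg : ContDiff ℝ (⊤ : ℕ∞) g)
    {ε R : ℝ} (hε : 0 < ε) (hεR : ε ≤ R)
    (h0 : ∀ t ≤ ε, g t = 0) (hR : ∀ t, R ≤ t → g t = 0) :
    ∫ t in Ioi (0:ℝ), (g t)^2 * t^(α-2) ≤
      (4/(α-1)^2) * ∫ t in Ioi (0:ℝ), (deriv g t)^2 * t^α := by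
  set a := ε/2 with ha_def
  set b := R+1 with hb_def
  have ha : 0 < a := by positivity
  have hab : a ≤ b := by simp only [ha_def, hb_def]; linarith
  have hβ : α - 1 ≠ 0 := sub_ne_zero.mpr hα
  set c := |α - 1| with hc_def
  have hc : 0 < c := abs_pos.mpr hβ
  have cg : Continuous g := hg.continuous
  have cg' : Continuous (deriv g) := hg.continuous_deriv (by simp)
  have hd0 : ∀ t < ε, deriv g t = 0 := by
    intro t ht
    have hev : g =ᶠ[nhds t] (fun _ => (0:ℝ)) :=
      Filter.eventually_of_mem (Iio_mem_nhds ht) (fun s hs => h0 s (le_of_lt hs))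
    rw [hev.deriv_eq, deriv_const]
  have hdb : ∀ t, b ≤ t → deriv g t = 0 := by
    intro t ht
    have hRt : R < t := by simp only [hb_def] at ht; linarith
    have hev : g =ᶠ[nhds t] (fun _ => (0:ℝ)) :=
      Filter.eventually_of_mem (Ioi_mem_nhds hRt) (fun s hs => hR s (le_of_lt hs))
    rw [hev.deriv_eq, deriv_const]
  have crp : ∀ γ : ℝ, ContinuousOn (fun t : ℝ => t ^ γ) (Ioi (0:ℝ)) := fun γ t ht =>
    (Real.continuousAt_rpow_const t γ (Or.inl (ne_of_gt ht))).continuousWithinAt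
  have hIcc : Icc a b ⊆ Ioi (0:ℝ) := fun t ht => lt_of_lt_of_le ha ht.1
  -- continuity of the three integrands on `Ioi 0`
  have c₁ : ContinuousOn (fun t : ℝ => (g t)^2 * t^(α-2)) (Ioi (0:ℝ)) :=
    (cg.pow 2).continuousOn.mul (crp (α-2))
  have c₂ : ContinuousOn (fun t : ℝ => (deriv g t)^2 * t^α) (Ioi (0:ℝ)) :=
    (cg'.pow 2).continuousOn.mul (crp α)
  have c₃ : ContinuousOn (fun t : ℝ => |g t| * |deriv g t| * t^(α-1)) (Ioi (0:ℝ)) :=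
    (cg.abs.mul cg'.abs).continuousOn.mul (crp (α-1))
  have i₁ : IntervalIntegrable (fun t : ℝ => (g t)^2 * t^(α-2)) volume a b := by
    apply ContinuousOn.intervalIntegrable
    rw [uIcc_of_le hab]; exact c₁.mono hIcc
  have i₂ : IntervalIntegrable (fun t : ℝ => (deriv g t)^2 * t^α) volume a b := by
    apply ContinuousOn.intervalIntegrable
    rw [uIcc_of_le hab]; exact c₂.mono hIcc
  have i₃ : IntervalIntegrable (fun t : ℝ => |g t| * |deriv g t| * t^(α-1)) volume a b := by
    apply ContinuousOn.intervalIntegrable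
    rw [uIcc_of_le hab]; exact c₃.mono hIcc
  have iT : IntervalIntegrable (fun t : ℝ => g t * deriv g t * t^(α-1)) volume a b := by
    apply ContinuousOn.intervalIntegrable
    rw [uIcc_of_le hab]
    exact ((cg.mul cg').continuousOn.mul (crp (α-1))).mono hIcc
  set A := ∫ t in a..b, (g t)^2 * t^(α-2) with hA_def
  set B := ∫ t in a..b, (deriv g t)^2 * t^α with hB_def
  set T := ∫ t in a..b, g t * deriv g t * t^(α-1) with hT_def
  -- FTC
  have hderivH : ∀ t ∈ uIcc a b, HasDerivAt (fun s => (g s)^2 * s ^ (α-1))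
      (2 * (g t * deriv g t * t^(α-1)) + (α-1) * ((g t)^2 * t^(α-2))) t := by
    intro t ht
    rw [uIcc_of_le hab] at ht
    have ht0 : (0:ℝ) < t := hIcc ht
    have h1 : HasDerivAt (fun s => (g s)^2) ((2:ℕ) * (g t)^(2-1) * deriv g t) t :=
      ((hg.differentiable (by simp) t).hasDerivAt).pow 2
    have h2 : HasDerivAt (fun s : ℝ => s ^ (α-1)) ((α-1) * t^(α-1-1)) t :=
      Real.hasDerivAt_rpow_const (Or.inl ht0.ne')
    have e : α - 1 - 1 = α - 2 := by ring
    rw [e] at h2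
    have h3 := h1.fun_mul h2
    refine h3.congr_deriv ?_
    push_cast
    ring
  have hintφ : IntervalIntegrable
      (fun t : ℝ => 2 * (g t * deriv g t * t^(α-1)) + (α-1) * ((g t)^2 * t^(α-2)))
      volume a b := (iT.const_mul 2).add (i₁.const_mul (α-1))
  have hftc : 2 * T + (α-1) * A = 0 := by
    have h := intervalIntegral.integral_eq_sub_of_hasDerivAt hderivH hintφ
    have hga : g a = 0 := h0 a (by simp only [ha_def]; linarith)
    have hgb : g b = 0 := hR b (by simp only [hb_def]; linarith)
    rw [intervalIntegral.integral_add (iT.const_mul 2) (i₁.const_mul (α-1)),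
      intervalIntegral.integral_const_mul, intervalIntegral.integral_const_mul,
      hga, hgb] at h
    simpa using h
  have hA : 0 ≤ A := by
    apply intervalIntegral.integral_nonneg hab
    intro t ht
    have ht0 : (0:ℝ) ≤ t := le_trans ha.le ht.1
    positivity
  -- pointwise AM-GM
  have key : ∀ X Y : ℝ, 0 ≤ X → 0 ≤ Y → X * Y ≤ c/4 * X^2 + 1/c * Y^2 := by
    intro X Y hX hY
    have h4c : (0:ℝ) < 4 * c := by positivity
    rw [← mul_le_mul_iff_right₀ h4c]
    have he : 4*c*(c/4*X^2 + 1/c*Y^2) = c^2*X^2 + 4*Y^2 := by field_simp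
    rw [he]
    nlinarith [sq_nonneg (c*X - 2*Y)]
  have hptw : ∀ t ∈ Icc a b, |g t| * |deriv g t| * t^(α-1) ≤
      c/4 * ((g t)^2 * t^(α-2)) + 1/c * ((deriv g t)^2 * t^α) := by
    intro t ht
    have ht0 : (0:ℝ) < t := hIcc ht
    have hp : t^(α-2) = (t^((α-2)/2))^2 := by
      rw [← Real.rpow_natCast (t ^ ((α-2)/2)) 2, ← Real.rpow_mul ht0.le]
      congr 1; push_cast; ring
    have hq : t^α = (t^(α/2))^2 := by
      rw [← Real.rpow_natCast (t ^ (α/2)) 2, ← Real.rpow_mul ht0.le]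
      congr 1; push_cast; ring
    have hpq : t^(α-1) = t^((α-2)/2) * t^(α/2) := by
      rw [← Real.rpow_add ht0]
      congr 1; ring
    have hXn : 0 ≤ |g t| * t^((α-2)/2) := mul_nonneg (abs_nonneg _) (Real.rpow_nonneg ht0.le _)
    have hYn : 0 ≤ |deriv g t| * t^(α/2) := mul_nonneg (abs_nonneg _) (Real.rpow_nonneg ht0.le _)
    calc |g t| * |deriv g t| * t^(α-1)
        = (|g t| * t^((α-2)/2)) * (|deriv g t| * t^(α/2)) := by rw [hpq]; ring
      _ ≤ c/4 * (|g t| * t^((α-2)/2))^2 + 1/c * (|deriv g t| * t^(α/2))^2 := key _ _ hXn hYn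
      _ = c/4 * ((g t)^2 * t^(α-2)) + 1/c * ((deriv g t)^2 * t^α) := by
          rw [mul_pow, mul_pow, sq_abs, sq_abs, ← hp, ← hq]
  have hcA : c * A ≤ 2 * (c/4 * A + 1/c * B) := by
    have h1 : c * A = |(α-1) * A| := by
      rw [abs_mul, hc_def, abs_of_nonneg hA]
    have h2 : (α-1) * A = -(2*T) := by linarith [hftc]
    have h3 : |(α-1) * A| = 2 * |T| := by rw [h2, abs_neg, abs_mul]; norm_num
    have h4 : |T| ≤ ∫ t in a..b, |g t * deriv g t * t^(α-1)| :=
      intervalIntegral.abs_integral_le_integral_abs hab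
    have h5 : ∫ t in a..b, |g t * deriv g t * t^(α-1)|
        = ∫ t in a..b, |g t| * |deriv g t| * t^(α-1) := by
      apply intervalIntegral.integral_congr
      intro t ht
      rw [uIcc_of_le hab] at ht
      have ht0 : (0:ℝ) < t := hIcc ht
      show |g t * deriv g t * t^(α-1)| = |g t| * |deriv g t| * t^(α-1)
      rw [abs_mul, abs_mul, abs_of_nonneg (Real.rpow_nonneg ht0.le _)]
    have h6 : ∫ t in a..b, |g t| * |deriv g t| * t^(α-1) ≤
        ∫ t in a..b, (c/4 * ((g t)^2 * t^(α-2)) + 1/c * ((deriv g t)^2 * t^α)) :=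
      intervalIntegral.integral_mono_on hab i₃ ((i₁.const_mul _).add (i₂.const_mul _)) hptw
    have h7 : ∫ t in a..b, (c/4 * ((g t)^2 * t^(α-2)) + 1/c * ((deriv g t)^2 * t^α))
        = c/4 * A + 1/c * B := by
      rw [intervalIntegral.integral_add (i₁.const_mul _) (i₂.const_mul _),
        intervalIntegral.integral_const_mul, intervalIntegral.integral_const_mul]
    calc c * A = 2 * |T| := by rw [h1, h3]
      _ ≤ 2 * (c/4 * A + 1/c * B) := by rw [← h7]; linarith [h4.trans (h5 ▸ h6)]
  have hAB : A ≤ 4/(α-1)^2 * B := by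
    have hc2 : c/2 * A ≤ 2/c * B := by
      have : 2 * (c/4 * A + 1/c * B) = c/2 * A + 2/c * B := by field_simp; ring
      rw [this] at hcA
      linarith
    have h2c : (0:ℝ) < 2/c := by positivity
    have := mul_le_mul_of_nonneg_left hc2 h2c.le
    have heq1 : 2/c * (c/2 * A) = A := by field_simp
    have heq2 : 2/c * (2/c * B) = 4/(α-1)^2 * B := by
      rw [show (α-1)^2 = c^2 by rw [hc_def, sq_abs]]
      field_simp; ring
    rw [heq1, heq2] at this
    exact this
  -- convert the Ioi-integrals to interval integrals
  have hvan1 : ∀ t : ℝ, t ∉ Icc a b → (g t)^2 * t^(α-2) = 0 := by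
    intro t ht
    rw [Set.mem_Icc, not_and_or, not_le, not_le] at ht
    rcases ht with ht | ht
    · rw [h0 t (by simp only [ha_def] at ht; linarith)]; ring
    · rw [hR t (by simp only [hb_def] at ht; linarith)]; ring
  have hvan2 : ∀ t : ℝ, t ∉ Icc a b → (deriv g t)^2 * t^α = 0 := by
    intro t ht
    rw [Set.mem_Icc, not_and_or, not_le, not_le] at ht
    rcases ht with ht | ht
    · rw [hd0 t (by simp only [ha_def] at ht; linarith)]; ring
    · rw [hdb t ht.le]; ring
  have v₁ := vanish_integrableOn (h := fun t : ℝ => (g t)^2 * t^(α-2)) ha c₁ hvan1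
  have v₂ := vanish_integrableOn (h := fun t : ℝ => (deriv g t)^2 * t^α) ha c₂ hvan2
  rw [v₁.2, v₂.2, integral_Icc_eq_integral_Ioc, integral_Icc_eq_integral_Ioc,
    ← intervalIntegral.integral_of_le hab, ← intervalIntegral.integral_of_le hab]
  exact hAB


noncomputable def hsEquiv (n : ℕ) : EuclideanSpace ℝ (Fin (n+1)) ≃ᵐ ℝ × (Fin n → ℝ) :=
  (MeasurableEquiv.toLp 2 (Fin (n+1) → ℝ)).symm.trans
    (MeasurableEquiv.piFinSuccAbove (fun _ : Fin (n+1) => ℝ) 0)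

lemma hsEquiv_mp (n : ℕ) : MeasurePreserving (hsEquiv n) volume (volume.prod volume) :=
  (EuclideanSpace.volume_preserving_symm_measurableEquiv_toLp (Fin (n+1))).trans
    (measurePreserving_piFinSuccAbove (fun _ : Fin (n+1) => (volume : Measure ℝ)) 0)

lemma hsEquiv_coord (n : ℕ) (t : ℝ) (y : Fin n → ℝ) :
    ((hsEquiv n).symm (t, y)) 0 = t := by
  show Fin.insertNth (α := fun _ : Fin (n+1) => ℝ) 0 t y 0 = t
  simp

lemma hsEquiv_preimage (n : ℕ) : {x : EuclideanSpace ℝ (Fin (n+1)) | 0 < x 0} =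
    (hsEquiv n) ⁻¹' (Ioi 0 ×ˢ univ) := by
  ext x
  simp only [Set.mem_setOf_eq, Set.mem_preimage, Set.mem_prod, Set.mem_Ioi, Set.mem_univ, and_true]
  rfl

lemma hsEquiv_affine (n : ℕ) (t : ℝ) (y : Fin n → ℝ) :
    ((hsEquiv n).symm (t, y)) = ((hsEquiv n).symm (0, y)) + t • ((hsEquiv n).symm (1, 0)) := by
  ext k
  show Fin.insertNth (α := fun _ : Fin (n+1) => ℝ) 0 t y k = Fin.insertNth (α := fun _ : Fin (n+1) => ℝ) 0 0 y k + t * Fin.insertNth (α := fun _ : Fin (n+1) => ℝ) 0 1 0 k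
  induction k using Fin.cases with
  | zero => simp
  | succ j =>
    simp [Fin.insertNth_apply_succAbove (i := (0 : Fin (n+1)))]

lemma hsEquiv_vnorm (n : ℕ) : ‖(hsEquiv n).symm (1, (0 : Fin n → ℝ))‖ = 1 := by
  have h : (hsEquiv n).symm (1, (0 : Fin n → ℝ)) = EuclideanSpace.single (0 : Fin (n+1)) (1:ℝ) := by
    ext k
    show Fin.insertNth (α := fun _ : Fin (n+1) => ℝ) 0 1 0 k
      = EuclideanSpace.single (0 : Fin (n+1)) (1:ℝ) k
    rw [EuclideanSpace.single_apply]
    induction k using Fin.cases with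
    | zero => simp
    | succ j => simp [Fin.insertNth_apply_succAbove (i := (0 : Fin (n+1))), Fin.succ_ne_zero j]
  rw [h, EuclideanSpace.norm_single, norm_one]

lemma coord_abs_le_norm {m : ℕ} (x : EuclideanSpace ℝ (Fin m)) (i : Fin m) : |x i| ≤ ‖x‖ := by
  rw [EuclideanSpace.norm_eq]
  rw [show |x i| = Real.sqrt ((x i)^2) from (Real.sqrt_sq_eq_abs _).symm]
  apply Real.sqrt_le_sqrt
  rw [show (x i)^2 = ‖x i‖^2 by rw [Real.norm_eq_abs, sq_abs]]
  exact Finset.single_le_sum (f := fun j => ‖x j‖^2) (fun j _ => sq_nonneg _) (Finset.mem_univ i)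

lemma half_integrable {n : ℕ} (f : EuclideanSpace ℝ (Fin (n+1)) → ℝ) (hf : Integrable f) :
    Integrable (fun p : ℝ × (Fin n → ℝ) => f ((hsEquiv n).symm p))
      ((volume.restrict (Ioi (0:ℝ))).prod volume) := by
  have h1 : Integrable (fun p : ℝ × (Fin n → ℝ) => f ((hsEquiv n).symm p)) (volume.prod volume) := by
    have h2 := ((MeasurePreserving.symm (hsEquiv n) (hsEquiv_mp n)).integrable_comp_emb
      (g := f) (MeasurableEquiv.measurableEmbedding (hsEquiv n).symm))
    exact h2.mpr hf
  have h3 := h1.restrict (s := Ioi (0:ℝ) ×ˢ univ)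
  rwa [← Measure.prod_restrict, Measure.restrict_univ] at h3

lemma half_integral {n : ℕ} (f : EuclideanSpace ℝ (Fin (n+1)) → ℝ) (hf : Integrable f) :
    ∫ x in {x : EuclideanSpace ℝ (Fin (n+1)) | 0 < x 0}, f x
      = ∫ y : Fin n → ℝ, ∫ t in Ioi (0:ℝ), f ((hsEquiv n).symm (t, y)) := by
  rw [hsEquiv_preimage n]
  have h1 : ∫ x in (hsEquiv n) ⁻¹' (Ioi 0 ×ˢ univ), f x
      = ∫ p in Ioi (0:ℝ) ×ˢ (univ : Set (Fin n → ℝ)), f ((hsEquiv n).symm p)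
        ∂((volume : Measure ℝ).prod (volume : Measure (Fin n → ℝ))) := by
    calc ∫ x in (hsEquiv n) ⁻¹' (Ioi 0 ×ˢ univ), f x
        = ∫ x in (hsEquiv n) ⁻¹' (Ioi 0 ×ˢ univ), f ((hsEquiv n).symm ((hsEquiv n) x)) := by
          simp only [MeasurableEquiv.symm_apply_apply]
      _ = _ := (hsEquiv_mp n).setIntegral_preimage_emb
          (MeasurableEquiv.measurableEmbedding _) (fun p => f ((hsEquiv n).symm p))
          (Ioi 0 ×ˢ univ)
  rw [h1, ← Measure.prod_restrict, Measure.restrict_univ]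
  exact integral_prod_symm _ (half_integrable f hf)


theorem stmt_2 (d : ℕ) (hd : 0 < d) (θ : ℝ) (hθ : θ ≠ (d : ℝ) + 1)
    (u : EuclideanSpace ℝ (Fin d) → ℝ) (hu : ContDiff ℝ (⊤ : ℕ∞) u) (hcs : HasCompactSupport u)
    (hb : ∃ ε > 0, ∀ x : EuclideanSpace ℝ (Fin d), x ⟨0, hd⟩ ≤ ε → u x = 0) :
    (∫ x in {x : EuclideanSpace ℝ (Fin d) | 0 < x ⟨0, hd⟩},
        (u x / x ⟨0, hd⟩) ^ 2 * (x ⟨0, hd⟩) ^ (θ - d))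
      ≤ (4 / ((d : ℝ) + 1 - θ) ^ 2) *
        ∫ x in {x : EuclideanSpace ℝ (Fin d) | 0 < x ⟨0, hd⟩},
          ‖fderiv ℝ u x‖ ^ 2 * (x ⟨0, hd⟩) ^ (θ - d) := by
  obtain ⟨ε, hε, hb⟩ := hb
  obtain ⟨n, rfl⟩ : ∃ n, d = n + 1 := ⟨d - 1, (Nat.succ_pred_eq_of_pos hd).symm⟩
  have hi0 : (⟨0, hd⟩ : Fin (n+1)) = 0 := Fin.ext (by simp)
  simp only [hi0] at hb ⊢
  set α := θ - ((n+1:ℕ):ℝ) with hα_def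
  have hα1 : α ≠ 1 := by
    rw [hα_def]; intro h; apply hθ; push_cast at h ⊢; linarith
  have hcont0 : Continuous (fun z : EuclideanSpace ℝ (Fin (n+1)) => z 0) := (continuous_apply 0).comp (PiLp.continuous_ofLp (p := 2) (β := fun _ : Fin (n+1) => ℝ))
  have hu0 : ∀ x : EuclideanSpace ℝ (Fin (n+1)), x 0 ≤ ε → u x = 0 := hb
  have hfd0 : ∀ x : EuclideanSpace ℝ (Fin (n+1)), x 0 < ε → fderiv ℝ u x = 0 := by
    intro x hx
    have hmem : {z : EuclideanSpace ℝ (Fin (n+1)) | z 0 < ε} ∈ nhds x :=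
      (isOpen_lt hcont0 continuous_const).mem_nhds hx
    have hev : u =ᶠ[nhds x] (fun _ => (0:ℝ)) :=
      Filter.eventually_of_mem hmem (fun z hz => hu0 z (le_of_lt hz))
    rw [hev.fderiv_eq]
    exact fderiv_const_apply 0
  obtain ⟨Rb, hRb⟩ : ∃ Rb : ℝ, ∀ x ∈ tsupport u, ‖x‖ ≤ Rb :=
    isBounded_iff_forall_norm_le.mp (IsCompact.isBounded hcs)
  have huR : ∀ x : EuclideanSpace ℝ (Fin (n+1)), Rb < ‖x‖ → u x = 0 := fun x hx =>
    image_eq_zero_of_notMem_tsupport (fun hmem => absurd (hRb x hmem) (not_le.mpr hx))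
  have hfdR : ∀ x : EuclideanSpace ℝ (Fin (n+1)), Rb < ‖x‖ → fderiv ℝ u x = 0 := fun x hx =>
    fderiv_of_notMem_tsupport ℝ (fun hmem => absurd (hRb x hmem) (not_le.mpr hx))
  set F := fun x : EuclideanSpace ℝ (Fin (n+1)) => (u x)^2 * (x 0)^(α-2) with hF_def
  set G := fun x : EuclideanSpace ℝ (Fin (n+1)) => ‖fderiv ℝ u x‖^2 * (x 0)^α with hG_def
  have hFcont : Continuous F := by
    rw [continuous_iff_continuousAt]; intro x
    rcases lt_or_ge (x 0) ε with hx | hx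
    · have hmem : {z : EuclideanSpace ℝ (Fin (n+1)) | z 0 < ε} ∈ nhds x :=
        (isOpen_lt hcont0 continuous_const).mem_nhds hx
      exact Filter.EventuallyEq.continuousAt (y := 0)
        (Filter.eventually_of_mem hmem (fun z hz => by simp [hF_def, hu0 z hz.le]))
    · have hx0 : (0:ℝ) < x 0 := lt_of_lt_of_le hε hx
      have h2 : ContinuousAt (fun x : EuclideanSpace ℝ (Fin (n+1)) => (x 0)^(α-2)) x :=
        hcont0.continuousAt.rpow_const (Or.inl hx0.ne')
      exact ((hu.continuous.pow 2).continuousAt).mul h2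
  have hFcs : HasCompactSupport F :=
    HasCompactSupport.intro hcs (fun x hx => by simp [hF_def, image_eq_zero_of_notMem_tsupport hx])
  have hFint : Integrable F := hFcont.integrable_of_hasCompactSupport hFcs
  have hGcont : Continuous G := by
    rw [continuous_iff_continuousAt]; intro x
    rcases lt_or_ge (x 0) ε with hx | hx
    · have hmem : {z : EuclideanSpace ℝ (Fin (n+1)) | z 0 < ε} ∈ nhds x :=
        (isOpen_lt hcont0 continuous_const).mem_nhds hx
      exact Filter.EventuallyEq.continuousAt (y := 0)
        (Filter.eventually_of_mem hmem (fun z hz => by simp [hG_def, hfd0 z hz]))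
    · have hx0 : (0:ℝ) < x 0 := lt_of_lt_of_le hε hx
      have h2 : ContinuousAt (fun x : EuclideanSpace ℝ (Fin (n+1)) => (x 0)^α) x :=
        hcont0.continuousAt.rpow_const (Or.inl hx0.ne')
      exact (((hu.continuous_fderiv (by simp)).norm.pow 2).continuousAt).mul h2
  have hGcs : HasCompactSupport G :=
    HasCompactSupport.intro hcs (fun x hx => by simp [hG_def, fderiv_of_notMem_tsupport ℝ hx])
  have hGint : Integrable G := hGcont.integrable_of_hasCompactSupport hGcs
  have hSmeas : MeasurableSet {x : EuclideanSpace ℝ (Fin (n+1)) | 0 < x 0} :=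
    (isOpen_lt continuous_const hcont0).measurableSet
  have hLHS : ∫ x in {x : EuclideanSpace ℝ (Fin (n+1)) | 0 < x 0}, (u x / x 0)^2 * (x 0)^α
      = ∫ x in {x : EuclideanSpace ℝ (Fin (n+1)) | 0 < x 0}, F x := by
    apply setIntegral_congr_fun hSmeas
    intro x hx
    have hx0 : (0:ℝ) < x 0 := hx
    simp only [hF_def]
    have h2 : (x 0:ℝ) ^ (α - 2) = (x 0)^α / (x 0)^(2:ℕ) := by
      rw [Real.rpow_sub hx0 α 2, ← Real.rpow_natCast (x 0) 2]
      norm_num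
    rw [div_pow, h2, div_mul_eq_mul_div, mul_div_assoc]
  have crp : ∀ γ : ℝ, ContinuousOn (fun t : ℝ => t ^ γ) (Ioi (0:ℝ)) := fun γ t ht =>
    (Real.continuousAt_rpow_const t γ (Or.inl (ne_of_gt ht))).continuousWithinAt
  set Rm := max (Rb + 1) ε with hRm_def
  have hεRm : ε ≤ Rm := le_max_right _ _
  have hkey : ∀ y : Fin n → ℝ,
      (∫ t in Ioi (0:ℝ), F ((hsEquiv n).symm (t, y)))
        ≤ (4/(α-1)^2) * ∫ t in Ioi (0:ℝ), G ((hsEquiv n).symm (t, y)) := by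
    intro y
    set c0 : EuclideanSpace ℝ (Fin (n+1)) := (hsEquiv n).symm (0, y) with hc0
    set v : EuclideanSpace ℝ (Fin (n+1)) := (hsEquiv n).symm (1, 0) with hv
    have hΦ : ∀ t : ℝ, (hsEquiv n).symm (t, y) = c0 + t • v := fun t => hsEquiv_affine n t y
    have hv1 : ‖v‖ = 1 := hsEquiv_vnorm n
    have hΦ0 : ∀ t : ℝ, ((hsEquiv n).symm (t, y)) 0 = t := fun t => hsEquiv_coord n t y
    have hΦ0' : ∀ t : ℝ, (c0 + t • v) 0 = t := fun t => by rw [← hΦ t]; exact hΦ0 t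
    have hΦnorm : ∀ t : ℝ, |t| ≤ ‖c0 + t • v‖ := fun t => by
      have h := coord_abs_le_norm (c0 + t • v) 0
      rwa [hΦ0' t] at h
    set g : ℝ → ℝ := fun t => u (c0 + t • v) with hg_def
    have hgsm : ContDiff ℝ (⊤ : ℕ∞) g :=
      hu.comp (contDiff_const.add (contDiff_id.smul contDiff_const))
    have hgd : ∀ t : ℝ, HasDerivAt g (fderiv ℝ u (c0 + t • v) v) t := by
      intro t
      have h1 : HasDerivAt (fun s : ℝ => c0 + s • v) v t := by
        simpa using ((hasDerivAt_id t).smul_const v).const_add c0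
      exact ((hu.differentiable (by simp) (c0 + t • v)).hasFDerivAt).comp_hasDerivAt t h1
    have hgderiv : ∀ t : ℝ, deriv g t = fderiv ℝ u (c0 + t • v) v := fun t => (hgd t).deriv
    have hg0 : ∀ t ≤ ε, g t = 0 := fun t ht => hu0 _ (by rw [hΦ0' t]; exact ht)
    have hgR : ∀ t : ℝ, Rm ≤ t → g t = 0 := by
      intro t ht
      apply huR
      have h1 : Rb + 1 ≤ t := le_trans (le_max_left _ _) ht
      calc Rb < Rb + 1 := by linarith
        _ ≤ t := h1
        _ ≤ |t| := le_abs_self t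
        _ ≤ ‖c0 + t • v‖ := hΦnorm t
    have hfdg0 : ∀ t : ℝ, t < ε → fderiv ℝ u (c0 + t • v) = 0 := fun t ht =>
      hfd0 _ (by rw [hΦ0' t]; exact ht)
    have hfdgR : ∀ t : ℝ, Rm ≤ t → fderiv ℝ u (c0 + t • v) = 0 := by
      intro t ht
      apply hfdR
      have h1 : Rb + 1 ≤ t := le_trans (le_max_left _ _) ht
      calc Rb < Rb + 1 := by linarith
        _ ≤ t := h1
        _ ≤ |t| := le_abs_self t
        _ ≤ ‖c0 + t • v‖ := hΦnorm t
    have h1D := hardy1D hα1 hgsm hε hεRm hg0 hgR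
    have hFmatch : ∀ t : ℝ, F ((hsEquiv n).symm (t, y)) = (g t)^2 * t^(α-2) := by
      intro t
      rw [hF_def]
      simp only
      rw [hΦ0 t, hΦ t]
    have hGmatch : ∀ t : ℝ, G ((hsEquiv n).symm (t, y))
        = ‖fderiv ℝ u (c0 + t • v)‖^2 * t^α := by
      intro t
      rw [hG_def]
      simp only
      rw [hΦ0 t, hΦ t]
    calc (∫ t in Ioi (0:ℝ), F ((hsEquiv n).symm (t, y)))
        = ∫ t in Ioi (0:ℝ), (g t)^2 * t^(α-2) := by
          exact setIntegral_congr_fun measurableSet_Ioi (fun t _ => hFmatch t)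
      _ ≤ (4/(α-1)^2) * ∫ t in Ioi (0:ℝ), (deriv g t)^2 * t^α := h1D
      _ ≤ (4/(α-1)^2) * ∫ t in Ioi (0:ℝ), G ((hsEquiv n).symm (t, y)) := by
          apply mul_le_mul_of_nonneg_left _ (by positivity)
          have hi1 : IntegrableOn (fun t : ℝ => (deriv g t)^2 * t^α) (Ioi (0:ℝ)) := by
            refine (vanish_integrableOn (a := ε/2) (R := Rm) (by positivity) ?_ ?_).1
            · exact ((hgsm.continuous_deriv (by simp)).pow 2).continuousOn.mul (crp α)
            · intro t ht
              rw [Set.mem_Icc, not_and_or, not_le, not_le] at ht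
              rcases ht with ht | ht
              · have hev : g =ᶠ[nhds t] (fun _ => (0:ℝ)) :=
                  Filter.eventually_of_mem (Iio_mem_nhds (show t < ε by linarith))
                    (fun s hs => hg0 s (le_of_lt hs))
                rw [hev.deriv_eq, deriv_const]; ring
              · rw [hgderiv t, hfdgR t ht.le]; simp
          have hi2 : IntegrableOn (fun t : ℝ => G ((hsEquiv n).symm (t, y))) (Ioi (0:ℝ)) := by
            refine (vanish_integrableOn (a := ε/2) (R := Rm) (by positivity) ?_ ?_).1
            · apply Continuous.continuousOn
              apply hGcont.comp
              have hΦc : Continuous (fun t : ℝ => (hsEquiv n).symm (t, y)) := by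
                rw [funext hΦ]
                exact continuous_const.add (continuous_id.smul continuous_const)
              exact hΦc
            · intro t ht
              rw [Set.mem_Icc, not_and_or, not_le, not_le] at ht
              rw [hGmatch t]
              rcases ht with ht | ht
              · rw [hfdg0 t (by linarith)]; simp
              · rw [hfdgR t ht.le]; simp
          apply setIntegral_mono_on hi1 hi2 measurableSet_Ioi
          intro t ht
          rw [hGmatch t, hgderiv t]
          have hb1 : ‖fderiv ℝ u (c0 + t • v) v‖ ≤ ‖fderiv ℝ u (c0 + t • v)‖ := by
            calc ‖fderiv ℝ u (c0 + t • v) v‖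
                ≤ ‖fderiv ℝ u (c0 + t • v)‖ * ‖v‖ := ContinuousLinearMap.le_opNorm _ _
              _ = ‖fderiv ℝ u (c0 + t • v)‖ := by rw [hv1, mul_one]
          have hsq : (fderiv ℝ u (c0 + t • v) v)^2 ≤ ‖fderiv ℝ u (c0 + t • v)‖^2 := by
            rw [← sq_abs, ← Real.norm_eq_abs]
            exact pow_le_pow_left₀ (norm_nonneg _) hb1 2
          exact mul_le_mul_of_nonneg_right hsq (Real.rpow_nonneg (le_of_lt ht) α)
  have hIF := (half_integrable F hFint).integral_prod_right
  have hIG := (half_integrable G hGint).integral_prod_right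
  calc (∫ x in {x : EuclideanSpace ℝ (Fin (n+1)) | 0 < x 0}, (u x / x 0)^2 * (x 0)^α)
      = ∫ x in {x : EuclideanSpace ℝ (Fin (n+1)) | 0 < x 0}, F x := hLHS
    _ = ∫ y : Fin n → ℝ, ∫ t in Ioi (0:ℝ), F ((hsEquiv n).symm (t, y)) := half_integral F hFint
    _ ≤ ∫ y : Fin n → ℝ, (4/(α-1)^2) * ∫ t in Ioi (0:ℝ), G ((hsEquiv n).symm (t, y)) :=
        integral_mono hIF (hIG.const_mul _) hkey
    _ = (4/(α-1)^2) * ∫ y : Fin n → ℝ, ∫ t in Ioi (0:ℝ), G ((hsEquiv n).symm (t, y)) :=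
        integral_const_mul _ _
    _ = (4/(α-1)^2) * ∫ x in {x : EuclideanSpace ℝ (Fin (n+1)) | 0 < x 0}, G x := by
        rw [half_integral G hGint]
    _ = (4/(((n+1:ℕ):ℝ) + 1 - θ)^2) * ∫ x in {x : EuclideanSpace ℝ (Fin (n+1)) | 0 < x 0}, G x := by
        congr 1
        rw [hα_def]
        congr 1
        ring
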